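/- Let τ > 1 be a real number and set D₁ = ∫₀^∞ (x²+1)^{−τ/2} dx. Let (h_k)_{k≥2} be a sequence with h_k ∈ (0,1) for all k, h_k → 0 and k·h_k → ∞ as k → ∞. Then lim_{k→∞} ( π √(1−h_k²) / (h_k k) ) · ∑_{i=1}^{⌊k/2⌋+1} ( 1 + ((1−h_k²)/h_k²) · ((i−1)² π² / k²) )^{−τ/2} = D₁. -/

import Mathlib

/-!
With the mesh `δₖ = π √(1 - hₖ²) / (hₖ k)` the expression is the left Riemann sum
`δₖ ∑_{j=0}^{N} f (j δₖ)`, `N = ⌊k/2⌋`, of `f x = (x² + 1)^(-τ/2)`. Since `f` decreases on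
`[0, ∞)`, such a sum lies between `∫₀^{(N+1)δ} f` and `δ f 0 + ∫₀^{Nδ} f`. Here `δₖ → 0`
because `k hₖ → ∞`, while `N δₖ ≈ π / (2 hₖ) → ∞` because `hₖ → 0`; so both bounds tend to
`∫₀^∞ f`, which is finite as `τ > 1`.
-/

open MeasureTheory Filter Finset Set Topology Real

section RiemannSum

variable {f : ℝ → ℝ} {δ : ℝ}

lemma intervalIntegral_zero_natCast_mul (hδ : δ ≠ 0) (n : ℕ) :
    ∫ x in 0..n * δ, f x = δ * ∫ x in (0 : ℝ)..n, f (x * δ) := by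
  rw [intervalIntegral.integral_comp_mul_right f hδ, smul_eq_mul, zero_mul,
    mul_inv_cancel_left₀ hδ]

lemma AntitoneOn.comp_mul_right_Ici (hf : AntitoneOn f (Ici 0)) (hδ : 0 ≤ δ) :
    AntitoneOn (fun x => f (x * δ)) (Ici 0) := fun _ ha _ hb hab =>
  hf (mul_nonneg ha hδ) (mul_nonneg hb hδ) (mul_le_mul_of_nonneg_right hab hδ)

lemma AntitoneOn.intervalIntegral_le_mul_sum_range (hf : AntitoneOn f (Ici 0)) (hδ : 0 < δ)
    (n : ℕ) : ∫ x in 0..n * δ, f x ≤ δ * ∑ j ∈ range n, f (j * δ) := by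
  have hg := ((hf.comp_mul_right_Ici hδ.le).mono Icc_subset_Ici_self).integral_le_sum
    (x₀ := 0) (a := n)
  simp only [zero_add] at hg
  rw [intervalIntegral_zero_natCast_mul hδ.ne']
  exact mul_le_mul_of_nonneg_left hg hδ.le

lemma AntitoneOn.mul_sum_range_succ_le (hf : AntitoneOn f (Ici 0)) (hδ : 0 < δ) (n : ℕ) :
    δ * ∑ j ∈ range (n + 1), f (j * δ) ≤ δ * f 0 + ∫ x in 0..n * δ, f x := by
  have hg := ((hf.comp_mul_right_Ici hδ.le).mono Icc_subset_Ici_self).sum_le_integral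
    (x₀ := 0) (a := n)
  simp only [zero_add] at hg
  rw [sum_range_succ', intervalIntegral_zero_natCast_mul hδ.ne', mul_add, add_comm]
  simpa using mul_le_mul_of_nonneg_left hg hδ.le

theorem AntitoneOn.tendsto_mul_sum_range_integral_Ioi {ι : Type*} {l : Filter ι}
    [l.IsCountablyGenerated] (hf : AntitoneOn f (Ici 0)) (hfi : IntegrableOn f (Ioi 0))
    {δ : ι → ℝ} {N : ι → ℕ}
    (hδ_pos : ∀ᶠ k in l, 0 < δ k) (hδ : Tendsto δ l (𝓝 0))
    (hNδ : Tendsto (fun k => (N k : ℝ) * δ k) l atTop) :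
    Tendsto (fun k => δ k * ∑ j ∈ range (N k + 1), f (j * δ k)) l (𝓝 (∫ x in Ioi 0, f x)) := by
  have hN₁δ : Tendsto (fun k => ((N k + 1 : ℕ) : ℝ) * δ k) l atTop := by
    refine tendsto_atTop_mono' l ?_ hNδ
    filter_upwards [hδ_pos] with k hk
    gcongr
    simp
  have hupper : Tendsto (fun k => δ k * f 0 + ∫ x in 0..N k * δ k, f x) l
      (𝓝 (∫ x in Ioi 0, f x)) := by
    simpa using (hδ.mul_const (f 0)).add (intervalIntegral_tendsto_integral_Ioi 0 hfi hNδ)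
  refine tendsto_of_tendsto_of_tendsto_of_le_of_le'
    (intervalIntegral_tendsto_integral_Ioi 0 hfi hN₁δ) hupper ?_ ?_
  · filter_upwards [hδ_pos] with k hk using hf.intervalIntegral_le_mul_sum_range hk _
  · filter_upwards [hδ_pos] with k hk using hf.mul_sum_range_succ_le hk _

end RiemannSum

lemma antitoneOn_rpow_sq_add_one_neg {τ : ℝ} (hτ : 0 ≤ τ) :
    AntitoneOn (fun x : ℝ => (x ^ 2 + 1) ^ (-τ / 2)) (Ici 0) := fun _ ha _ _ hab =>
  rpow_le_rpow_of_nonpos (by positivity) (by gcongr) (by linarith)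

lemma integrable_rpow_sq_add_one_neg {τ : ℝ} (hτ : 1 < τ) :
    Integrable (fun x : ℝ => (x ^ 2 + 1) ^ (-τ / 2)) := by
  simpa [add_comm] using
    integrable_rpow_neg_one_add_norm_sq (E := ℝ) (μ := volume) (r := τ) (by simpa using hτ)

lemma tendsto_natCast_div_two_mul_atTop {δ : ℕ → ℝ} (hδ_nonneg : ∀ᶠ k in atTop, 0 ≤ δ k)
    (hδ : Tendsto δ atTop (𝓝 0)) (hkδ : Tendsto (fun k : ℕ => k * δ k) atTop atTop) :
    Tendsto (fun k => ((k / 2 : ℕ) : ℝ) * δ k) atTop atTop := by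
  have hlower : Tendsto (fun k : ℕ => (k * δ k + -δ k) / 2) atTop atTop :=
    (hkδ.atTop_add hδ.neg).atTop_div_const two_pos
  refine tendsto_atTop_mono' _ ?_ hlower
  filter_upwards [hδ_nonneg] with k hk
  have : (k : ℝ) ≤ 2 * ((k / 2 : ℕ) : ℝ) + 1 := by
    exact_mod_cast (by omega : k ≤ 2 * (k / 2) + 1)
  nlinarith

lemma sum_Icc_one_succ_natCast_sub_one {M : Type*} [AddCommMonoid M] (g : ℝ → M) (n : ℕ) :
    ∑ i ∈ Icc 1 (n + 1), g ((i : ℝ) - 1) = ∑ j ∈ range (n + 1), g j := by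
  rw [← Finset.Ico_add_one_right_eq_Icc, Finset.sum_Ico_eq_sum_range]
  simp

section Mesh

variable {h : ℕ → ℝ}

noncomputable def mesh (h : ℕ → ℝ) (k : ℕ) : ℝ := π * √(1 - h k ^ 2) / (h k * k)

lemma one_add_div_sq_mul_eq_sq_mesh_add_one {k : ℕ} (hk : k ≠ 0) (hh : h k ∈ Set.Ioo 0 1)
    (x : ℝ) :
    1 + (1 - h k ^ 2) / h k ^ 2 * (x ^ 2 * π ^ 2 / (k : ℝ) ^ 2) = (x * mesh h k) ^ 2 + 1 := by
  have hs : √(1 - h k ^ 2) ^ 2 = 1 - h k ^ 2 := sq_sqrt (by nlinarith [hh.1, hh.2])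
  have : h k ≠ 0 := hh.1.ne'
  rw [mesh]
  field_simp
  rw [hs]
  ring

lemma eventually_mesh_pos (hh : ∀ᶠ k in atTop, h k ∈ Set.Ioo 0 1) :
    ∀ᶠ k in atTop, 0 < mesh h k := by
  filter_upwards [hh, eventually_gt_atTop 0] with k ⟨hh0, hh1⟩ hk
  have : 0 < 1 - h k ^ 2 := by nlinarith
  rw [mesh]
  positivity

lemma tendsto_pi_mul_sqrt_one_sub_sq (h0 : Tendsto h atTop (𝓝 0)) :
    Tendsto (fun k => π * √(1 - h k ^ 2)) atTop (𝓝 π) := by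
  simpa using (((h0.pow 2).const_sub 1).sqrt).const_mul π

lemma tendsto_mesh_zero (h0 : Tendsto h atTop (𝓝 0))
    (hk : Tendsto (fun k : ℕ => (k : ℝ) * h k) atTop atTop) :
    Tendsto (mesh h) atTop (𝓝 0) := by
  have hlim : Tendsto (fun k => π * √(1 - h k ^ 2) * (k * h k)⁻¹) atTop (𝓝 0) := by
    simpa using (tendsto_pi_mul_sqrt_one_sub_sq h0).mul hk.inv_tendsto_atTop
  refine hlim.congr fun k => ?_
  rw [mesh, mul_comm (k : ℝ), div_eq_mul_inv]

lemma tendsto_natCast_mul_mesh_atTop (hh : ∀ᶠ k in atTop, h k ∈ Set.Ioo 0 1)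
    (h0 : Tendsto h atTop (𝓝 0)) :
    Tendsto (fun k : ℕ => k * mesh h k) atTop atTop := by
  have hinv : Tendsto (fun k => (h k)⁻¹) atTop atTop :=
    (tendsto_nhdsWithin_iff.2 ⟨h0, hh.mono fun k hk => hk.1⟩).inv_tendsto_nhdsGT_zero
  refine ((tendsto_pi_mul_sqrt_one_sub_sq h0).pos_mul_atTop pi_pos hinv).congr' ?_
  filter_upwards [hh, eventually_gt_atTop 0] with k hhk hk
  have : h k ≠ 0 := hhk.1.ne'
  rw [mesh]
  field_simp

end Mesh

theorem stmt_6 (τ : ℝ) (hτ : 1 < τ)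
    (D₁ : ℝ) (hD₁ : D₁ = ∫ x in Set.Ioi (0 : ℝ), (x ^ 2 + 1) ^ (-τ / 2))
    (h : ℕ → ℝ) (hmem : ∀ k, 2 ≤ k → h k ∈ Set.Ioo (0 : ℝ) 1)
    (h0 : Tendsto h atTop (nhds 0))
    (hk : Tendsto (fun k : ℕ => (k : ℝ) * h k) atTop atTop) :
    Tendsto (fun k : ℕ =>
        Real.pi * Real.sqrt (1 - h k ^ 2) / (h k * k) *
          ∑ i ∈ Finset.Icc 1 (k / 2 + 1),
            (1 + (1 - h k ^ 2) / h k ^ 2 * (((i : ℝ) - 1) ^ 2 * Real.pi ^ 2 / (k : ℝ) ^ 2))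
              ^ (-τ / 2))
      atTop (nhds D₁) := by
  have hh : ∀ᶠ k in atTop, h k ∈ Set.Ioo 0 1 := eventually_atTop.2 ⟨2, hmem⟩
  have hmesh_pos := eventually_mesh_pos hh
  have hmesh := tendsto_mesh_zero h0 hk
  have hsum := (antitoneOn_rpow_sq_add_one_neg (by linarith)).tendsto_mul_sum_range_integral_Ioi
    (integrable_rpow_sq_add_one_neg hτ).integrableOn hmesh_pos hmesh
    (tendsto_natCast_div_two_mul_atTop (hmesh_pos.mono fun _ => le_of_lt) hmesh
      (tendsto_natCast_mul_mesh_atTop hh h0))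
  rw [hD₁]
  refine hsum.congr' ?_
  filter_upwards [hh, eventually_ne_atTop 0] with k hhk hk0
  simp_rw [one_add_div_sq_mul_eq_sq_mesh_add_one hk0 hhk]
  rw [sum_Icc_one_succ_natCast_sub_one (fun x => ((x * mesh h k) ^ 2 + 1) ^ (-τ / 2)), mesh]
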